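/- arXiv:1708.00457 — 2 statements merged into one kernel-verified Lean document; each statement's English description precedes it below -/
import Mathlib

section
/- Let (uₙ) be a bounded sequence in H^{1/2}(ℝ) such that for some R > 0, lim_{n→∞} sup_{y ∈ ℝ} ∫_{y−R}^{y+R} |uₙ|² dx = 0. Then uₙ → 0 strongly in L^p(ℝ) for every p ∈ (2, ∞). -/
/-!
Write `w = u ^ 2`. For `x` in an interval `I` and a subinterval `J ⊆ I` of length `r ≤ |I| / 2`
within distance `r` of `x`, comparing `u x` with `u y`, `y ∈ J`, gives
`w x * r ≤ 2 ∫_J w + 2 r² ∫_I |u x - u y|² / |x - y|² dy`, and Hölder bounds `(∫_J w) ^ (m + 1)`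
by `r ^ m ∫_I w ^ (m + 1)`. Optimising in `r` yields
`∫_I w ^ (m + 2) ≲ (∫_I w ^ (m + 1)) * (Gagliardo energy on I × I + |I|⁻¹ ∫_I w)`.
Summing over a covering of `ℝ` by intervals of length `2R`, `∫ w ^ (m + 2)` is controlled by the
largest local mass `sup_I ∫_I w ^ (m + 1)`. The vanishing hypothesis is the case `m = 0`, so by
induction `uₙ → 0` in every `L^(2m + 4)`, and Hölder interpolation against the bounded `L²` norm
covers every exponent `p > 2`.
-/

open MeasureTheory Filter

/-- The squared Gagliardo `H^{1/2}(ℝ)` seminorm as an extended-real double integral. -/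
noncomputable def gagliardoSq (u : ℝ → ℝ) : ENNReal :=
  ∫⁻ x : ℝ, ∫⁻ y : ℝ, ENNReal.ofReal ((u x - u y) ^ 2 / (x - y) ^ 2)

open Set
open scoped ENNReal Topology

section Interpolation

variable {α : Type*} [MeasurableSpace α] {μ : Measure α}

theorem lintegral_pow_le_measure_univ_pow_mul {f : α → ℝ≥0∞} (hf : AEMeasurable f μ) (m : ℕ) :
    (∫⁻ a, f a ∂μ) ^ (m + 1) ≤ μ univ ^ m * ∫⁻ a, f a ^ (m + 1) ∂μ := by
  have hm : (0 : ℝ) < m + 1 := by positivity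
  have hHolder := ENNReal.lintegral_mul_norm_pow_le (hf.pow_const (m + 1))
    (aemeasurable_const (b := (1 : ℝ≥0∞))) (p := 1 / (m + 1)) (q := m / (m + 1))
    (by positivity) (by positivity) (by field_simp; ring)
  have hroot : ∀ a, (f a ^ (m + 1)) ^ (1 / (m + 1) : ℝ) = f a := fun a => by
    rw [← ENNReal.rpow_natCast, ← ENNReal.rpow_mul]
    push_cast
    rw [mul_one_div_cancel hm.ne', ENNReal.rpow_one]
  simp only [hroot, ENNReal.one_rpow, mul_one, lintegral_const, one_mul] at hHolder
  calc (∫⁻ a, f a ∂μ) ^ (m + 1)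
      ≤ ((∫⁻ a, f a ^ (m + 1) ∂μ) ^ (1 / (m + 1) : ℝ) * μ univ ^ (m / (m + 1) : ℝ)) ^ (m + 1) := by
        gcongr
    _ = μ univ ^ m * ∫⁻ a, f a ^ (m + 1) ∂μ := by
        rw [mul_pow, ← ENNReal.rpow_natCast _ (m + 1), ← ENNReal.rpow_natCast (_ ^ _) (m + 1),
          ← ENNReal.rpow_mul, ← ENNReal.rpow_mul, mul_comm]
        push_cast
        rw [one_div_mul_cancel hm.ne', div_mul_cancel₀ _ hm.ne', ENNReal.rpow_one,
          ENNReal.rpow_natCast]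

theorem lintegral_rpow_le_interpolation {f : α → ℝ≥0∞} (hf : AEMeasurable f μ) {q j : ℝ}
    (hq : 1 ≤ q) (hqj : q ≤ j) (hj : 1 < j) :
    ∫⁻ a, f a ^ q ∂μ ≤
      (∫⁻ a, f a ∂μ) ^ ((j - q) / (j - 1)) * (∫⁻ a, f a ^ j ∂μ) ^ ((q - 1) / (j - 1)) := by
  have hj1 : 0 < j - 1 := by linarith
  have hsplit : ∀ a, f a ^ q = f a ^ ((j - q) / (j - 1)) * (f a ^ j) ^ ((q - 1) / (j - 1)) :=
    fun a => by
      rw [← ENNReal.rpow_mul, ← ENNReal.rpow_add_of_nonneg _ _ (by bound) (by bound)]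
      congr 1
      field_simp
      ring
  simp only [hsplit]
  exact ENNReal.lintegral_mul_norm_pow_le hf (hf.pow_const j) (by bound) (by bound)
    (by field_simp; ring)

end Interpolation

theorem tendsto_zero_of_le_const_mul {ι : Type*} {l : Filter ι} {f g : ι → ℝ≥0∞} {C : ℝ≥0∞}
    (hC : C ≠ ∞) (hg : Tendsto g l (𝓝 0)) (hfg : ∀ i, f i ≤ C * g i) : Tendsto f l (𝓝 0) := by
  have hCg : Tendsto (fun i => C * g i) l (𝓝 0) := by
    simpa using ENNReal.Tendsto.const_mul hg (Or.inr hC)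
  exact tendsto_of_tendsto_of_tendsto_of_le_of_le tendsto_const_nhds hCg (fun _ => zero_le) hfg

theorem tendsto_lintegral_rpow_of_interpolation {ι α : Type*} [MeasurableSpace α] {μ : Measure α}
    {l : Filter ι} {f : ι → α → ℝ≥0∞} (hf : ∀ i, AEMeasurable (f i) μ) {M : ℝ≥0∞} (hM : M ≠ ∞)
    (hbound : ∀ i, ∫⁻ a, f i a ∂μ ≤ M) {q j : ℝ} (hq : 1 < q) (hqj : q ≤ j)
    (hj : Tendsto (fun i => ∫⁻ a, f i a ^ j ∂μ) l (𝓝 0)) :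
    Tendsto (fun i => ∫⁻ a, f i a ^ q ∂μ) l (𝓝 0) := by
  have hj1 : 0 < j - 1 := by linarith
  have hpow : Tendsto (fun i => (∫⁻ a, f i a ^ j ∂μ) ^ ((q - 1) / (j - 1))) l (𝓝 0) := by
    have hcont := (ENNReal.continuous_rpow_const (y := (q - 1) / (j - 1))).tendsto 0
    rw [ENNReal.zero_rpow_of_pos (div_pos (sub_pos.2 hq) hj1)] at hcont
    exact hcont.comp hj
  refine tendsto_zero_of_le_const_mul (C := M ^ ((j - q) / (j - 1)))
    (ENNReal.rpow_ne_top_of_nonneg (div_nonneg (by linarith) hj1.le) hM) hpow fun i => ?_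
  calc ∫⁻ a, f i a ^ q ∂μ
      ≤ (∫⁻ a, f i a ∂μ) ^ ((j - q) / (j - 1)) * (∫⁻ a, f i a ^ j ∂μ) ^ ((q - 1) / (j - 1)) :=
        lintegral_rpow_le_interpolation (hf i) hq.le hqj (by linarith)
    _ ≤ M ^ ((j - q) / (j - 1)) * (∫⁻ a, f i a ^ j ∂μ) ^ ((q - 1) / (j - 1)) := by
        gcongr
        exact hbound i

section Optimization

variable {w r A D T β : ℝ≥0∞}

theorem pow_succ_mul_le_of_absorb (m : ℕ) (hw : w ≠ ∞) (hr0 : r ≠ 0) (hr : r ≠ ∞)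
    (hA : A ^ (m + 1) ≤ r ^ m * T) (hwr : w * r ≤ 2 * A + 2 * (r ^ 2 * D))
    (hD : 4 * r * D ≤ w) : w ^ (m + 1) * r ≤ 4 ^ (m + 1) * T := by
  have hwrA : w * r ≤ 4 * A := by
    refine ENNReal.le_of_add_le_add_right (ENNReal.mul_ne_top hw hr) ?_
    calc w * r + w * r = 2 * (w * r) := (two_mul _).symm
      _ ≤ 2 * (2 * A + 2 * (r ^ 2 * D)) := by gcongr
      _ = 4 * A + r * (4 * r * D) := by ring
      _ ≤ 4 * A + r * w := by gcongr
      _ = 4 * A + w * r := by rw [mul_comm r]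
  refine (ENNReal.mul_le_mul_iff_left (pow_ne_zero m hr0) (ENNReal.pow_ne_top hr)).1 ?_
  calc w ^ (m + 1) * r * r ^ m = (w * r) ^ (m + 1) := by ring
    _ ≤ (4 * A) ^ (m + 1) := by gcongr
    _ = 4 ^ (m + 1) * A ^ (m + 1) := mul_pow _ _ _
    _ ≤ 4 ^ (m + 1) * (r ^ m * T) := by gcongr
    _ = 4 ^ (m + 1) * T * r ^ m := by ring

/-- Take `r = min β (w / 4D)`: the largest scale at which `2 * (r ^ 2 * D)` is absorbed into
`w * r / 2`. -/
theorem pow_add_two_le_of_forall_scale (m : ℕ) (hw : w ≠ ∞) (hT : T ≠ 0) (hβ0 : β ≠ 0)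
    (hβ : β ≠ ∞)
    (h : ∀ r, r ≠ 0 → r ≤ β → ∃ A, A ^ (m + 1) ≤ r ^ m * T ∧ w * r ≤ 2 * A + 2 * (r ^ 2 * D)) :
    w ^ (m + 2) ≤ 4 ^ (m + 2) * T * (D + β⁻¹ * w) := by
  have hscale : ∀ r, r ≠ 0 → r ≤ β → 4 * r * D ≤ w → w ^ (m + 1) * r ≤ 4 ^ (m + 1) * T :=
    fun r hr0 hrβ hD =>
      let ⟨_, hA, hwr⟩ := h r hr0 hrβ
      pow_succ_mul_le_of_absorb m hw hr0 (ne_top_of_le_ne_top hβ hrβ) hA hwr hD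
  rcases eq_or_ne D ∞ with rfl | hDtop
  · simp [hT]
  rcases eq_or_ne w 0 with rfl | hw0
  · simp
  rcases le_or_gt (4 * β * D) w with hβD | hβD
  · calc w ^ (m + 2) = w ^ (m + 1) * β * (β⁻¹ * w) := by
          rw [mul_assoc, ← mul_assoc β, ENNReal.mul_inv_cancel hβ0 hβ, one_mul, pow_succ]
      _ ≤ 4 ^ (m + 1) * T * (β⁻¹ * w) := by gcongr ?_ * _; exact hscale β hβ0 le_rfl hβD
      _ ≤ 4 ^ (m + 2) * T * (D + β⁻¹ * w) := by
          gcongr ?_ * _ * ?_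
          · exact pow_le_pow_right₀ (by norm_num) (by omega)
          · exact le_add_self
  · have hD0 : D ≠ 0 := by rintro rfl; simp at hβD
    have h4D0 : 4 * D ≠ 0 := mul_ne_zero (by norm_num) hD0
    have h4D : 4 * D ≠ ∞ := ENNReal.mul_ne_top (by norm_num) hDtop
    have hr : w / (4 * D) * (4 * D) = w := ENNReal.div_mul_cancel h4D0 h4D
    have hr0 : w / (4 * D) ≠ 0 := by simp [ENNReal.div_eq_zero_iff, hw0, h4D]
    have hrβ : w / (4 * D) ≤ β :=
      ENNReal.div_le_of_le_mul (by rw [← mul_assoc, mul_comm β]; exact hβD.le)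
    have hrD : 4 * (w / (4 * D)) * D ≤ w := by rw [mul_comm 4, mul_assoc, hr]
    calc w ^ (m + 2) = w ^ (m + 1) * (w / (4 * D)) * (4 * D) := by rw [mul_assoc, hr, pow_succ]
      _ ≤ 4 ^ (m + 1) * T * (4 * D) := by gcongr ?_ * _; exact hscale _ hr0 hrβ hrD
      _ = 4 ^ (m + 2) * T * D := by ring
      _ ≤ 4 ^ (m + 2) * T * (D + β⁻¹ * w) := by gcongr; exact le_self_add

end Optimization

noncomputable def sqDensity (u : ℝ → ℝ) (x : ℝ) : ℝ≥0∞ := ENNReal.ofReal (u x ^ 2)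

noncomputable def gagliardoKernel (u : ℝ → ℝ) (x y : ℝ) : ℝ≥0∞ :=
  ENNReal.ofReal ((u x - u y) ^ 2 / (x - y) ^ 2)

section LocalEstimate

variable {u : ℝ → ℝ}

theorem Measurable.sqDensity (hu : Measurable u) : Measurable (sqDensity u) :=
  (hu.pow_const 2).ennreal_ofReal

theorem Measurable.gagliardoKernel_uncurry (hu : Measurable u) :
    Measurable (Function.uncurry (gagliardoKernel u)) :=
  ((((hu.comp measurable_fst).sub (hu.comp measurable_snd)).pow_const 2).div
    ((measurable_fst.sub measurable_snd).pow_const 2)).ennreal_ofReal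

theorem Measurable.setLIntegral_gagliardoKernel (hu : Measurable u) (s : Set ℝ) :
    Measurable fun x => ∫⁻ y in s, gagliardoKernel u x y :=
  hu.gagliardoKernel_uncurry.lintegral_prod_right'

theorem sqDensity_le_of_abs_sub_le {x y r : ℝ} (h : |x - y| ≤ r) :
    sqDensity u x ≤ 2 * sqDensity u y + 2 * (ENNReal.ofReal r ^ 2 * gagliardoKernel u x y) := by
  have hr : 0 ≤ r := (abs_nonneg _).trans h
  have hreal : u x ^ 2 ≤ 2 * u y ^ 2 + 2 * (r ^ 2 * ((u x - u y) ^ 2 / (x - y) ^ 2)) := by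
    rcases eq_or_ne x y with rfl | hxy
    · simp only [sub_self]
      nlinarith [sq_nonneg (u x)]
    have hdiff : (u x - u y) ^ 2 ≤ r ^ 2 * ((u x - u y) ^ 2 / (x - y) ^ 2) := by
      have hxy2 : (x - y) ^ 2 ≤ r ^ 2 := sq_le_sq' (abs_le.1 h).1 (abs_le.1 h).2
      rw [mul_div_assoc', le_div_iff₀ (by positivity [sub_ne_zero.2 hxy])]
      nlinarith [sq_nonneg (u x - u y)]
    nlinarith [sq_nonneg (u x - 2 * u y)]
  calc sqDensity u x
      ≤ ENNReal.ofReal (2 * u y ^ 2 + 2 * (r ^ 2 * ((u x - u y) ^ 2 / (x - y) ^ 2))) :=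
        ENNReal.ofReal_le_ofReal hreal
    _ = _ := by
        rw [ENNReal.ofReal_add (by positivity) (by positivity), ENNReal.ofReal_mul zero_le_two,
          ENNReal.ofReal_mul zero_le_two, ENNReal.ofReal_mul (by positivity),
          ENNReal.ofReal_pow hr, ENNReal.ofReal_ofNat]
        rfl

theorem sqDensity_mul_le_of_subset_Icc (hu : Measurable u) {x r : ℝ} {J : Set ℝ}
    (hJ : volume J = ENNReal.ofReal r) (hJx : J ⊆ Icc (x - r) (x + r)) :
    sqDensity u x * ENNReal.ofReal r ≤
      2 * (∫⁻ y in J, sqDensity u y) +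
        2 * (ENNReal.ofReal r ^ 2 * ∫⁻ y in J, gagliardoKernel u x y) := by
  have hK : Measurable (gagliardoKernel u x) :=
    hu.gagliardoKernel_uncurry.comp measurable_prodMk_left
  calc sqDensity u x * ENNReal.ofReal r = ∫⁻ _ in J, sqDensity u x := by
        rw [setLIntegral_const, hJ]
    _ ≤ ∫⁻ y in J, (2 * sqDensity u y + 2 * (ENNReal.ofReal r ^ 2 * gagliardoKernel u x y)) := by
        refine setLIntegral_mono ((hu.sqDensity.const_mul 2).add ((hK.const_mul _).const_mul 2))
          fun y hy => sqDensity_le_of_abs_sub_le ?_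
        exact abs_sub_le_iff.2 ⟨by linarith [(hJx hy).1], by linarith [(hJx hy).2]⟩
    _ = _ := by
        rw [lintegral_add_left (hu.sqDensity.const_mul 2), lintegral_const_mul' 2 _ (by simp),
          lintegral_const_mul' 2 _ (by simp), lintegral_const_mul' _ _ (by simp)]

theorem exists_subset_Ico_volume_eq {a b x r : ℝ} (hx : x ∈ Ico a b) (hr : 0 < r)
    (hrab : 2 * r ≤ b - a) :
    ∃ J ⊆ Ico a b, volume J = ENNReal.ofReal r ∧ J ⊆ Icc (x - r) (x + r) := by
  rcases le_or_gt (x + r) b with hxr | hxr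
  · refine ⟨Ico x (x + r), Ico_subset_Ico hx.1 hxr, by simp, ?_⟩
    exact Ico_subset_Icc_self.trans (Icc_subset_Icc (by linarith) le_rfl)
  · refine ⟨Ico (x - r) x, Ico_subset_Ico (by linarith) hx.2.le, by simp, ?_⟩
    exact Ico_subset_Icc_self.trans (Icc_subset_Icc le_rfl (by linarith))

theorem sqDensity_pow_add_two_le (hu : Measurable u) {a b x : ℝ} (hx : x ∈ Ico a b) (m : ℕ)
    (hT : ∫⁻ y in Ico a b, sqDensity u y ^ (m + 1) ≠ 0) :
    sqDensity u x ^ (m + 2) ≤ 4 ^ (m + 2) * (∫⁻ y in Ico a b, sqDensity u y ^ (m + 1)) *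
      ((∫⁻ y in Ico a b, gagliardoKernel u x y) +
        (ENNReal.ofReal ((b - a) / 2))⁻¹ * sqDensity u x) := by
  have hab : 0 < (b - a) / 2 := by linarith [hx.1, hx.2]
  refine pow_add_two_le_of_forall_scale m ENNReal.ofReal_ne_top hT (by simpa using hab)
    ENNReal.ofReal_ne_top fun r hr0 hrβ => ?_
  have hr : r ≠ ∞ := ne_top_of_le_ne_top ENNReal.ofReal_ne_top hrβ
  obtain ⟨ρ, hρ0, rfl⟩ : ∃ ρ : ℝ, 0 < ρ ∧ ENNReal.ofReal ρ = r :=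
    ⟨r.toReal, ENNReal.toReal_pos hr0 hr, ENNReal.ofReal_toReal hr⟩
  have hρab : 2 * ρ ≤ b - a := by
    have := (ENNReal.ofReal_le_ofReal_iff hab.le).1 hrβ
    linarith
  obtain ⟨J, hJI, hJ, hJx⟩ := exists_subset_Ico_volume_eq hx hρ0 hρab
  refine ⟨∫⁻ y in J, sqDensity u y, ?_, ?_⟩
  · calc (∫⁻ y in J, sqDensity u y) ^ (m + 1)
        ≤ volume J ^ m * ∫⁻ y in J, sqDensity u y ^ (m + 1) := by
          simpa only [Measure.restrict_apply_univ] using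
            lintegral_pow_le_measure_univ_pow_mul (μ := volume.restrict J)
              hu.sqDensity.aemeasurable m
      _ ≤ ENNReal.ofReal ρ ^ m * ∫⁻ y in Ico a b, sqDensity u y ^ (m + 1) := by
          rw [hJ]
          gcongr
  · calc sqDensity u x * ENNReal.ofReal ρ
        ≤ 2 * (∫⁻ y in J, sqDensity u y) +
            2 * (ENNReal.ofReal ρ ^ 2 * ∫⁻ y in J, gagliardoKernel u x y) :=
          sqDensity_mul_le_of_subset_Icc hu hJ hJx
      _ ≤ 2 * (∫⁻ y in J, sqDensity u y) +
            2 * (ENNReal.ofReal ρ ^ 2 * ∫⁻ y in Ico a b, gagliardoKernel u x y) := by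
          gcongr

theorem setLIntegral_sqDensity_pow_add_two_le (hu : Measurable u) (a b : ℝ) (m : ℕ) :
    ∫⁻ x in Ico a b, sqDensity u x ^ (m + 2) ≤
      4 ^ (m + 2) * (∫⁻ y in Ico a b, sqDensity u y ^ (m + 1)) *
        ((∫⁻ x in Ico a b, ∫⁻ y in Ico a b, gagliardoKernel u x y) +
          (ENNReal.ofReal ((b - a) / 2))⁻¹ * ∫⁻ x in Ico a b, sqDensity u x) := by
  rcases eq_or_ne (∫⁻ y in Ico a b, sqDensity u y ^ (m + 1)) 0 with hT | hT
  · have hzero := (lintegral_eq_zero_iff (hu.sqDensity.pow_const _)).1 hT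
    refine le_of_eq_of_le ?_ zero_le
    rw [lintegral_eq_zero_iff (hu.sqDensity.pow_const _)]
    filter_upwards [hzero] with y hy
    exact pow_eq_zero_iff (by omega) |>.2 (pow_eq_zero_iff (by omega) |>.1 hy)
  have hmeas : Measurable fun x => (∫⁻ y in Ico a b, gagliardoKernel u x y) +
      (ENNReal.ofReal ((b - a) / 2))⁻¹ * sqDensity u x :=
    (hu.setLIntegral_gagliardoKernel _).add (hu.sqDensity.const_mul _)
  calc ∫⁻ x in Ico a b, sqDensity u x ^ (m + 2)
      ≤ ∫⁻ x in Ico a b, 4 ^ (m + 2) * (∫⁻ y in Ico a b, sqDensity u y ^ (m + 1)) *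
          ((∫⁻ y in Ico a b, gagliardoKernel u x y) +
            (ENNReal.ofReal ((b - a) / 2))⁻¹ * sqDensity u x) :=
        setLIntegral_mono (hmeas.const_mul _) fun x hx => sqDensity_pow_add_two_le hu hx m hT
    _ = _ := by
        rw [lintegral_const_mul _ hmeas, lintegral_add_left (hu.setLIntegral_gagliardoKernel _),
          lintegral_const_mul _ hu.sqDensity]

end LocalEstimate

def cell (L : ℝ) (k : ℤ) : Set ℝ := Ico (k • L) ((k + 1) • L)

theorem tsum_setLIntegral_cell {L : ℝ} (hL : 0 < L) (f : ℝ → ℝ≥0∞) :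
    ∑' k, ∫⁻ x in cell L k, f x = ∫⁻ x, f x := by
  unfold cell
  rw [← lintegral_iUnion (fun _ => measurableSet_Ico) (pairwise_disjoint_Ico_zsmul L) f,
    iUnion_Ico_zsmul hL, Measure.restrict_univ]

section Global

variable {u : ℝ → ℝ}

theorem lintegral_sqDensity_pow_add_two_le (hu : Measurable u) {L : ℝ} (hL : 0 < L) (m : ℕ) :
    ∫⁻ x, sqDensity u x ^ (m + 2) ≤
      4 ^ (m + 2) * (⨆ k, ∫⁻ x in cell L k, sqDensity u x ^ (m + 1)) *
        (gagliardoSq u + (ENNReal.ofReal (L / 2))⁻¹ * ∫⁻ x, sqDensity u x) := by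
  set S := ⨆ k, ∫⁻ x in cell L k, sqDensity u x ^ (m + 1)
  have hcell : ∀ k, ∫⁻ x in cell L k, sqDensity u x ^ (m + 2) ≤
      4 ^ (m + 2) * S * ((∫⁻ x in cell L k, ∫⁻ y in cell L k, gagliardoKernel u x y) +
        (ENNReal.ofReal (L / 2))⁻¹ * ∫⁻ x in cell L k, sqDensity u x) := fun k => by
    unfold cell
    have hlocal := setLIntegral_sqDensity_pow_add_two_le hu (k • L) ((k + 1) • L) m
    rw [show (k + 1) • L - k • L = L by simp [add_smul]] at hlocal
    exact hlocal.trans (by gcongr; exact le_iSup (fun k => ∫⁻ x in cell L k, _) k)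
  have henergy : ∑' k, ∫⁻ x in cell L k, ∫⁻ y in cell L k, gagliardoKernel u x y ≤ gagliardoSq u :=
    calc ∑' k, ∫⁻ x in cell L k, ∫⁻ y in cell L k, gagliardoKernel u x y
        ≤ ∑' k, ∫⁻ x in cell L k, ∫⁻ y, gagliardoKernel u x y :=
          ENNReal.tsum_le_tsum fun _ => lintegral_mono fun _ => setLIntegral_le_lintegral _ _
      _ = gagliardoSq u := tsum_setLIntegral_cell hL _
  calc ∫⁻ x, sqDensity u x ^ (m + 2) = ∑' k, ∫⁻ x in cell L k, sqDensity u x ^ (m + 2) :=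
        (tsum_setLIntegral_cell hL _).symm
    _ ≤ ∑' k, 4 ^ (m + 2) * S * ((∫⁻ x in cell L k, ∫⁻ y in cell L k, gagliardoKernel u x y) +
          (ENNReal.ofReal (L / 2))⁻¹ * ∫⁻ x in cell L k, sqDensity u x) :=
        ENNReal.tsum_le_tsum hcell
    _ = 4 ^ (m + 2) * S * ((∑' k, ∫⁻ x in cell L k, ∫⁻ y in cell L k, gagliardoKernel u x y) +
          (ENNReal.ofReal (L / 2))⁻¹ * ∑' k, ∫⁻ x in cell L k, sqDensity u x) := by
        rw [ENNReal.tsum_mul_left, ENNReal.tsum_add, ENNReal.tsum_mul_left]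
    _ ≤ _ := by
        rw [tsum_setLIntegral_cell hL]
        gcongr

theorem iSup_setLIntegral_cell_le (hu : Measurable u) (hfin : ∫⁻ x, sqDensity u x ≠ ∞) (R : ℝ) :
    ⨆ k, ∫⁻ x in cell (2 * R) k, sqDensity u x ≤
      ENNReal.ofReal (⨆ y : ℝ, ∫ x in Ioo (y - R) (y + R), u x ^ 2) := by
  have hnn : 0 ≤ᵐ[volume] fun x => u x ^ 2 := ae_of_all _ fun x => sq_nonneg _
  have hint : Integrable fun x => u x ^ 2 :=
    ⟨(hu.pow_const 2).aestronglyMeasurable, (hasFiniteIntegral_iff_ofReal hnn).2 hfin.lt_top⟩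
  have hbdd : BddAbove (range fun y => ∫ x in Ioo (y - R) (y + R), u x ^ 2) :=
    ⟨∫ x, u x ^ 2, by rintro _ ⟨y, rfl⟩; exact setIntegral_le_integral hint hnn⟩
  refine iSup_le fun k => ?_
  obtain ⟨y, hy⟩ : ∃ y, y = k • (2 * R) + R := ⟨_, rfl⟩
  have hcell : cell (2 * R) k =ᵐ[volume] Ioo (y - R) (y + R) := by
    rw [show y - R = k • (2 * R) by rw [hy]; ring,
      show y + R = (k + 1) • (2 * R) by rw [hy, add_smul, one_smul]; ring]
    exact Ioo_ae_eq_Ico.symm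
  calc ∫⁻ x in cell (2 * R) k, sqDensity u x
      = ∫⁻ x in Ioo (y - R) (y + R), ENNReal.ofReal (u x ^ 2) := setLIntegral_congr hcell
    _ = ENNReal.ofReal (∫ x in Ioo (y - R) (y + R), u x ^ 2) :=
        (ofReal_integral_eq_lintegral_ofReal hint.restrict (ae_restrict_of_ae hnn)).symm
    _ ≤ _ := ENNReal.ofReal_le_ofReal (le_ciSup hbdd _)

end Global

theorem tendsto_lintegral_sqDensity_pow {u : ℕ → ℝ → ℝ} (hu : ∀ n, Measurable (u n))
    {M : ℝ≥0∞} (hM : M ≠ ∞) (hbound : ∀ n, (∫⁻ x, sqDensity (u n) x) + gagliardoSq (u n) ≤ M)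
    {L : ℝ} (hL : 0 < L)
    (hloc : Tendsto (fun n => ⨆ k, ∫⁻ x in cell L k, sqDensity (u n) x) atTop (𝓝 0)) (m : ℕ) :
    Tendsto (fun n => ∫⁻ x, sqDensity (u n) x ^ (m + 2)) atTop (𝓝 0) := by
  have hC : ∀ m : ℕ, 4 ^ (m + 2) * (M + (ENNReal.ofReal (L / 2))⁻¹ * M) ≠ ∞ := fun m => by
    have : (ENNReal.ofReal (L / 2))⁻¹ ≠ ∞ := by simpa using hL
    finiteness
  have hstep : ∀ m n, ∫⁻ x, sqDensity (u n) x ^ (m + 2) ≤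
      4 ^ (m + 2) * (M + (ENNReal.ofReal (L / 2))⁻¹ * M) *
        ⨆ k, ∫⁻ x in cell L k, sqDensity (u n) x ^ (m + 1) := fun m n => by
    refine (lintegral_sqDensity_pow_add_two_le (hu n) hL m).trans ?_
    rw [mul_right_comm]
    gcongr
    · exact le_add_self.trans (hbound n)
    · exact le_self_add.trans (hbound n)
  have hsup : ∀ m : ℕ, Tendsto (fun n => ⨆ k, ∫⁻ x in cell L k, sqDensity (u n) x ^ (m + 1))
      atTop (𝓝 0) := by
    intro m
    induction m with
    | zero => simpa using hloc
    | succ m ih =>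
      exact tendsto_zero_of_le_const_mul (hC m) ih fun n =>
        (iSup_le fun k => setLIntegral_le_lintegral _ _).trans (hstep m n)
  exact tendsto_zero_of_le_const_mul (hC m) (hsup m) (hstep m)

theorem ofReal_abs_rpow_eq_sqDensity_rpow (u : ℝ → ℝ) (x : ℝ) {p : ℝ} (hp : 0 ≤ p) :
    ENNReal.ofReal (|u x| ^ p) = sqDensity u x ^ (p / 2) := by
  rw [sqDensity, ENNReal.ofReal_rpow_of_nonneg (sq_nonneg _) (by linarith), ← sq_abs,
    ← Real.rpow_natCast, ← Real.rpow_mul (abs_nonneg _)]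
  congr 2
  ring

/-- Fractional vanishing lemma of P.L. Lions in `H^{1/2}(ℝ)`. -/
theorem stmt_13 (u : ℕ → ℝ → ℝ) (hmeas : ∀ n, Measurable (u n))
    (M : ENNReal) (hM : M ≠ ⊤)
    (hbound : ∀ n,
      (∫⁻ x : ℝ, ENNReal.ofReal ((u n x) ^ 2)) + gagliardoSq (u n) ≤ M)
    (R : ℝ) (hR : 0 < R)
    (hvanish : Tendsto
      (fun n => ⨆ y : ℝ, ∫ x in Set.Ioo (y - R) (y + R), (u n x) ^ 2)
      atTop (nhds 0)) :
    ∀ p : ℝ, 2 < p →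
      Tendsto (fun n => ∫⁻ x : ℝ, ENNReal.ofReal (|u n x| ^ p)) atTop (nhds 0) := by
  intro p hp
  have hmass : ∀ n, ∫⁻ x, sqDensity (u n) x ≤ M := fun n => le_self_add.trans (hbound n)
  have hloc : Tendsto (fun n => ⨆ k, ∫⁻ x in cell (2 * R) k, sqDensity (u n) x) atTop (𝓝 0) := by
    have hlim := ENNReal.tendsto_ofReal hvanish
    rw [ENNReal.ofReal_zero] at hlim
    exact tendsto_of_tendsto_of_tendsto_of_le_of_le tendsto_const_nhds hlim (fun _ => zero_le)
      fun n => iSup_setLIntegral_cell_le (hmeas n) (ne_top_of_le_ne_top hM (hmass n)) R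
  have hpow := tendsto_lintegral_sqDensity_pow hmeas hM hbound (by linarith) hloc ⌈p⌉₊
  have hinterp := tendsto_lintegral_rpow_of_interpolation
    (fun n => (hmeas n).sqDensity.aemeasurable) hM hmass (q := p / 2) (j := (⌈p⌉₊ + 2 : ℕ))
    (by linarith) (by push_cast; linarith [Nat.le_ceil p])
    (by simpa only [ENNReal.rpow_natCast] using hpow)
  simpa only [ofReal_abs_rpow_eq_sqDensity_rpow _ _ (by linarith : (0 : ℝ) ≤ p)] using hinterp
end

section
/- Let f : ℝ → ℝ be continuous with f(s)/s strictly increasing on (0,∞) and f odd. Let u, v : ℝ → ℝ be measurable with ∫_ℝ f(u)u dx and ∫_ℝ f(v)v dx finite, and suppose (tₙ) ⊂ (0,∞) with tₙ ≥ 1 + ε₀ for all n and some ε₀ > 0. If ∫_ℝ (f(tₙu)u/tₙ − f(u)u) dx → 0 as n → ∞ and u ≢ 0, then ∫_ℝ (f((1+ε₀)u)u/(1+ε₀) − f(u)u) dx ≤ 0, contradicting strict positivity of the integrand on {u ≠ 0}; hence no such sequence (tₙ) exists, i.e., limsupₙ tₙ ≤ 1 whenever the above difference tends to 0 with u ≢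 0. -/
/-!
For `a > 1` the gap `f(a s) s / a - f(s) s` is positive whenever `s ≠ 0`, and it increases with `a`.
If `limsup tₙ > 1`, pick `1 < b < limsup tₙ`: for the infinitely many `n` with `tₙ > b`, the
integrand of the `n`-th integral dominates the gap at `b` evaluated along `u`, whose integral is a
fixed positive number because `u ≠ 0` on a set of positive measure. So these integrals cannot tend
to `0`.
-/

open MeasureTheory Filter Set

noncomputable def energyGap (f : ℝ → ℝ) (a s : ℝ) : ℝ := f (a * s) * s / a - f s * s

section Monotonicity

variable {f : ℝ → ℝ}

theorem strictMonoOn_apply_mul_mul_div (hmono : StrictMonoOn (fun s => f s / s) (Ioi 0))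
    (hodd : ∀ s, f (-s) = -f s) {s : ℝ} (hs : s ≠ 0) :
    StrictMonoOn (fun a => f (a * s) * s / a) (Ioi 0) := by
  have of_pos : ∀ s : ℝ, 0 < s → StrictMonoOn (fun a => f (a * s) * s / a) (Ioi 0) := by
    intro s hs a ha c hc hac
    have hquot : f (a * s) / (a * s) < f (c * s) / (c * s) :=
      hmono (mul_pos ha hs) (mul_pos hc hs) (mul_lt_mul_of_pos_right hac hs)
    have ha' : a ≠ 0 := ne_of_gt ha
    have hc' : c ≠ 0 := ne_of_gt hc
    calc f (a * s) * s / a = f (a * s) / (a * s) * (s * s) := by field_simp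
      _ < f (c * s) / (c * s) * (s * s) := mul_lt_mul_of_pos_right hquot (mul_pos hs hs)
      _ = f (c * s) * s / c := by field_simp
  rcases hs.lt_or_gt with hneg | hpos
  · have heven : ∀ a : ℝ, f (a * -s) * -s = f (a * s) * s := fun a => by
      rw [mul_neg a s, hodd, neg_mul_neg]
    simpa only [heven] using of_pos (-s) (neg_pos.mpr hneg)
  · exact of_pos s hpos

theorem monotoneOn_energyGap (hmono : StrictMonoOn (fun s => f s / s) (Ioi 0))
    (hodd : ∀ s, f (-s) = -f s) (s : ℝ) : MonotoneOn (fun a => energyGap f a s) (Ioi 0) := by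
  intro a ha c hc hac
  rcases eq_or_ne s 0 with rfl | hs
  · simp [energyGap]
  · simpa [energyGap] using (strictMonoOn_apply_mul_mul_div hmono hodd hs).monotoneOn ha hc hac

theorem energyGap_pos (hmono : StrictMonoOn (fun s => f s / s) (Ioi 0))
    (hodd : ∀ s, f (-s) = -f s) {a s : ℝ} (ha : 1 < a) (hs : s ≠ 0) : 0 < energyGap f a s := by
  have := strictMonoOn_apply_mul_mul_div hmono hodd hs (mem_Ioi.mpr one_pos)
    (mem_Ioi.mpr (one_pos.trans ha)) ha
  simp only [one_mul, div_one] at this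
  simpa [energyGap] using this

theorem energyGap_nonneg (hmono : StrictMonoOn (fun s => f s / s) (Ioi 0))
    (hodd : ∀ s, f (-s) = -f s) {a : ℝ} (ha : 1 < a) (s : ℝ) : 0 ≤ energyGap f a s := by
  rcases eq_or_ne s 0 with rfl | hs
  · simp [energyGap]
  · exact (energyGap_pos hmono hodd ha hs).le

end Monotonicity

theorem integral_comp_pos_of_pos_of_ne_zero {α : Type*} [MeasurableSpace α] {μ : Measure α}
    {D : ℝ → ℝ} {u : α → ℝ} (hnonneg : ∀ s, 0 ≤ D s) (hpos : ∀ s, s ≠ 0 → 0 < D s)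
    (hint : Integrable (fun x => D (u x)) μ) (hu0 : ¬ ∀ᵐ x ∂μ, u x = 0) :
    0 < ∫ x, D (u x) ∂μ := by
  rw [integral_pos_iff_support_of_nonneg (fun x => hnonneg (u x)) hint]
  have hsupp : {x | u x ≠ 0} ⊆ Function.support (fun x => D (u x)) :=
    fun x hx => (hpos _ hx).ne'
  rw [ae_iff] at hu0
  exact (pos_iff_ne_zero.mpr hu0).trans_le (measure_mono hsupp)

theorem stmt_19 (f : ℝ → ℝ) (hf : Continuous f)
    (hmono : StrictMonoOn (fun s => f s / s) (Set.Ioi (0 : ℝ)))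
    (hodd : ∀ s, f (-s) = -f s)
    (u : ℝ → ℝ) (hu : Measurable u)
    (hint : Integrable (fun x => f (u x) * u x))
    (t : ℕ → ℝ) (ht : ∀ n, 0 < t n)
    (hintn : ∀ n, Integrable (fun x => f (t n * u x) * u x))
    (hconv : Tendsto
      (fun n => ∫ x : ℝ, (f (t n * u x) * u x / t n - f (u x) * u x))
      atTop (nhds 0))
    (hu0 : ¬ (∀ᵐ x : ℝ, u x = 0)) :
    limsup t atTop ≤ 1 := by
  by_contra! hlim
  obtain ⟨b, hb1, hblim⟩ := exists_between hlim
  have hfreq : ∃ᶠ n in atTop, b < t n :=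
    frequently_lt_of_lt_limsup (isBoundedUnder_of ⟨0, fun n => (ht n).le⟩).isCoboundedUnder_le
      hblim
  have hgap_int : ∀ n, Integrable (fun x => energyGap f (t n) (u x)) :=
    fun n => ((hintn n).div_const (t n)).sub hint
  have hgap_le : ∀ n, b < t n → ∀ x, energyGap f b (u x) ≤ energyGap f (t n) (u x) :=
    fun n hn x => monotoneOn_energyGap hmono hodd (u x) (mem_Ioi.mpr (one_pos.trans hb1))
      (mem_Ioi.mpr (one_pos.trans (hb1.trans hn))) hn.le
  obtain ⟨n₀, hn₀⟩ := hfreq.exists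
  have hb_int : Integrable (fun x => energyGap f b (u x)) := by
    refine (hgap_int n₀).mono' (by unfold energyGap; fun_prop) (Eventually.of_forall fun x => ?_)
    rw [Real.norm_of_nonneg (energyGap_nonneg hmono hodd hb1 _)]
    exact hgap_le n₀ hn₀ x
  have hc := integral_comp_pos_of_pos_of_ne_zero (energyGap_nonneg hmono hodd hb1)
    (fun _ => energyGap_pos hmono hodd hb1) hb_int hu0
  obtain ⟨n, hn, hsmall⟩ := (hfreq.and_eventually (hconv.eventually_lt_const hc)).exists
  have hlarge : ∫ x, energyGap f b (u x) ≤ ∫ x, energyGap f (t n) (u x) :=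
    integral_mono hb_int (hgap_int n) (hgap_le n hn)
  exact hsmall.not_ge hlarge
end
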